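/- Let p be a prime and consider the derivation δ of the polynomial ring 𝔽_p[x] determined by δ(x) = x^p − x. Then δ^p = δ, i.e., the p-fold composite of δ equals δ. (Equivalently, δ^p = (−1)^{p−1} δ, since (−1)^{p−1} = 1 in characteristic p.) -/

import Mathlib

/-!
In characteristic `p` the general Leibniz rule for `D^p (a * b)` keeps only its two extreme
terms, since `p ∣ p.choose k` for `0 < k < p`; so `D^p` is again a derivation (Hochschild), and
a derivation of `R[X]` is determined by its value at `X`. For `δ = (X^p - X) d/dX` the
polynomial `δ X = X^p - X` is an eigenvector of `δ` with eigenvalue `-1`, whence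
`δ^p X = (-1)^(p-1) (X^p - X) = δ X`.
-/

open Polynomial Finset

namespace Derivation

section Leibniz

variable {R A : Type*} [CommSemiring R] [CommSemiring A] [Algebra R A] (D : Derivation R A A)

theorem iterate_apply_mul (n : ℕ) (a b : A) :
    D^[n] (a * b) = ∑ ij ∈ antidiagonal n, n.choose ij.1 • (D^[ij.1] a * D^[ij.2] b) := by
  induction n with
  | zero => simp
  | succ n ih =>
    rw [sum_antidiagonal_choose_succ_nsmul (fun i j => D^[i] a * D^[j] b) n]
    simp only [Function.iterate_succ_apply', ih, map_sum, map_nsmul, leibniz, smul_eq_mul,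
      smul_add, sum_add_distrib]
    congr 1
    refine sum_congr rfl fun ⟨i, j⟩ hij => ?_
    rw [n.choose_symm_of_eq_add (mem_antidiagonal.1 hij).symm, mul_comm]

theorem iterate_prime_apply_mul (p : ℕ) [hp : Fact p.Prime] [CharP A p] (a b : A) :
    D^[p] (a * b) = D^[p] a * b + a * D^[p] b := by
  have hp0 : p ≠ 0 := hp.out.ne_zero
  rw [iterate_apply_mul, sum_eq_add_of_mem (p, 0) (0, p) (by simp) (by simp) (by simp [hp0])]
  · simp
  · rintro ⟨i, j⟩ hij hne
    rw [HasAntidiagonal.mem_antidiagonal] at hij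
    obtain ⟨hi, hj⟩ : i ≠ 0 ∧ i < p := by
      simp only [ne_eq, Prod.mk.injEq] at hne
      omega
    rw [nsmul_eq_mul, (CharP.cast_eq_zero_iff A p _).2 (hp.out.dvd_choose_self hi hj), zero_mul]

end Leibniz

variable {R A : Type*} [CommSemiring R] [CommRing A] [Algebra R A]

def iterateChar (D : Derivation R A A) (p : ℕ) [Fact p.Prime] [CharP A p] : Derivation R A A :=
  mk' (D.toLinearMap ^ p) fun a b => by
    simp only [Module.End.pow_apply, coeFn_coe, iterate_prime_apply_mul, smul_eq_mul]
    ring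

@[simp]
theorem coe_iterateChar (D : Derivation R A A) (p : ℕ) [Fact p.Prime] [CharP A p] :
    ⇑(D.iterateChar p) = D^[p] := by
  ext a
  simp [iterateChar, Module.End.pow_apply]

end Derivation

theorem Module.End.pow_apply_of_apply_eq_smul {R M : Type*} [CommSemiring R] [AddCommMonoid M]
    [Module R M] {f : Module.End R M} {c : R} {v : M} (hv : f v = c • v) (n : ℕ) :
    (f ^ n) v = c ^ n • v := by
  induction n with
  | zero => simp
  | succ n ih => rw [pow_succ', Module.End.mul_apply, ih, map_smul, hv, smul_smul, pow_succ]

theorem CharP.neg_one_pow_char_sub_one (R : Type*) [Ring R] (p : ℕ) [Fact p.Prime] [CharP R p] :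
    (-1 : R) ^ (p - 1) = 1 := by
  have h := neg_one_pow_char R p
  rw [← Nat.sub_add_cancel (Fact.out : p.Prime).one_le, pow_succ] at h
  simpa using congrArg (· * (-1 : R)) h

namespace Polynomial

variable {R : Type*} [CommRing R] (p : ℕ) [CharP R p]

theorem mkDerivation_X_pow_sub_X_self :
    mkDerivation R (X ^ p - X : R[X]) (X ^ p - X) = -(X ^ p - X) := by
  rw [mkDerivation_apply, derivative_sub, derivative_X_pow, derivative_X, CharP.cast_eq_zero,
    map_zero, zero_mul, zero_sub, neg_one_smul]

theorem iterateChar_mkDerivation_X_pow_sub_X [hp : Fact p.Prime] :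
    (mkDerivation R (X ^ p - X : R[X])).iterateChar p = mkDerivation R (X ^ p - X : R[X]) := by
  set δ := mkDerivation R (X ^ p - X : R[X])
  have hδ : (δ : Module.End R R[X]) (X ^ p - X) = (-1 : R) • (X ^ p - X) := by
    rw [Derivation.coeFn_coe, mkDerivation_X_pow_sub_X_self, neg_one_smul]
  have hpow : (δ : Module.End R R[X]) ^ p = (δ : Module.End R R[X]) ^ (p - 1) * δ := by
    rw [← pow_succ, Nat.sub_add_cancel hp.out.one_le]
  refine derivation_ext ?_
  calc ((δ : Module.End R R[X]) ^ p) X = ((δ : Module.End R R[X]) ^ (p - 1)) (δ X) := by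
        rw [hpow, Module.End.mul_apply, Derivation.coeFn_coe]
    _ = δ X := by
        rw [mkDerivation_X, Module.End.pow_apply_of_apply_eq_smul hδ,
          CharP.neg_one_pow_char_sub_one, one_smul]

end Polynomial

/-- The derivation δ = (x^p − x) d/dx of 𝔽_p[x] satisfies δ^p = δ. -/
theorem hirokado_derivation_p_closed
    (p : ℕ) [Fact p.Prime] :
    (fun f : (ZMod p)[X] => (X ^ p - X) * derivative f)^[p] =
      fun f : (ZMod p)[X] => (X ^ p - X) * derivative f := by
  have hδ : (fun f : (ZMod p)[X] => (X ^ p - X) * derivative f) =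
      mkDerivation (ZMod p) (X ^ p - X) := by
    ext1 f
    rw [mkDerivation_apply, smul_eq_mul, mul_comm]
  rw [hδ, ← Derivation.coe_iterateChar, iterateChar_mkDerivation_X_pow_sub_X]
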